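/- Let f: ℝ × ℝ^d → ℝ be C¹, and suppose f satisfies: for each i and each w ∈ [0,∞)^d \ {0} with w_i = 0, (e₀ + e_i - ‖w‖₁^{-1}Σ_{j≠i} w_j e_j)·∇f(log‖w‖₁, arg(w)) = 0. Then the function g(w) = f(log‖w‖₁, arg(w)) satisfies ∂g/∂z_i(w) = 0 for all w ∈ [0,∞)^d \ {0} with w_i = 0 (interpreting the derivative as the limit from the interior). -/

import Mathlib

open Real Finset

/-!
Write `g = f ∘ φ` with `φ w = (log ∑ w, w / ∑ w)`, which is smooth wherever `∑ w ≠ 0`. Its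
derivative in direction `v` is `(∑ w)⁻¹ • (∑ v, v - (∑ v / ∑ w) • w)`; for `v = eᵢ` and `wᵢ = 0`
this is `(∑ w)⁻¹` times the vector `e₀ + eᵢ - (∑ w)⁻¹ ∑_{j ≠ i} wⱼ eⱼ` on which `Df` vanishes by
assumption, so the chain rule gives `Dg(w) eᵢ = 0`.
-/

section Lamperti

variable {ι : Type*} [Fintype ι]

/-- On the orthant `∑ k, w k = ‖w‖₁`, so this is `(log ‖w‖₁, arg w)`. -/
noncomputable def toLamperti (w : ι → ℝ) : ℝ × (ι → ℝ) :=
  (Real.log (∑ k, w k), fun k => w k / ∑ k, w k)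

lemma toLamperti_eq_smul (w : ι → ℝ) :
    toLamperti w = (Real.log (∑ k, w k), (∑ k, w k)⁻¹ • w) := by
  ext k <;> simp [toLamperti, div_eq_inv_mul]

lemma hasFDerivAt_toLamperti {w : ι → ℝ} (hw : ∑ k, w k ≠ 0) :
    HasFDerivAt toLamperti
      (((∑ k, w k)⁻¹ • ∑ k, ContinuousLinearMap.proj (R := ℝ) k).prod
        ((∑ k, w k)⁻¹ • ContinuousLinearMap.id ℝ (ι → ℝ) +
          (-((∑ k, w k) ^ 2)⁻¹ • ∑ k, ContinuousLinearMap.proj (R := ℝ) k).smulRight w)) w := by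
  have hsum : HasFDerivAt (fun v : ι → ℝ => ∑ k, v k)
      (∑ k, ContinuousLinearMap.proj (R := ℝ) k) w :=
    HasFDerivAt.fun_sum fun k _ => hasFDerivAt_apply k w
  rw [funext toLamperti_eq_smul]
  exact (hsum.log hw).prodMk
    (((hasDerivAt_inv hw).comp_hasFDerivAt w hsum).smul (hasFDerivAt_id w))

lemma fderiv_toLamperti_apply {w : ι → ℝ} (hw : ∑ k, w k ≠ 0) (v : ι → ℝ) :
    fderiv ℝ toLamperti w v =
      (∑ k, w k)⁻¹ • (∑ k, v k, v - ((∑ k, v k) / ∑ k, w k) • w) := by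
  rw [(hasFDerivAt_toLamperti hw).fderiv]
  refine Prod.ext ?_ ?_
  · simp
  · simp only [ContinuousLinearMap.prod_apply, add_apply, smul_apply, _root_.sum_apply,
      ContinuousLinearMap.proj_apply, ContinuousLinearMap.id_apply,
      ContinuousLinearMap.smulRight_apply, Prod.smul_snd]
    module

lemma fderiv_toLamperti_single [DecidableEq ι] {w : ι → ℝ} (hw : ∑ k, w k ≠ 0) {i : ι}
    (hwi : w i = 0) :
    fderiv ℝ toLamperti w (Pi.single i 1) =
      (∑ k, w k)⁻¹ • ((1 : ℝ), fun j => if j = i then (1 : ℝ) else -(w j / ∑ k, w k)) := by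
  have hsingle : ∑ k, (Pi.single i 1 : ι → ℝ) k = 1 := by simp
  rw [fderiv_toLamperti_apply hw, hsingle]
  congr 2
  ext j
  rcases eq_or_ne j i with rfl | hji
  · simp [hwi]
  · simp [hji, div_eq_inv_mul]

end Lamperti

theorem classD_implies_neumann_general (d : ℕ)
    (f : ℝ × (Fin d → ℝ) → ℝ) (hf : ContDiff ℝ 1 f)
    (hbc : ∀ (i : Fin d) (w : Fin d → ℝ), (∀ k, 0 ≤ w k) → w ≠ 0 → w i = 0 →
      fderiv ℝ f (Real.log (∑ k, w k), fun k => w k / ∑ k, w k)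
        ((1 : ℝ), fun j => if j = i then (1 : ℝ) else -(w j / ∑ k, w k)) = 0)
    (g : (Fin d → ℝ) → ℝ)
    (hg : g = fun w => f (Real.log (∑ k, w k), fun k => w k / ∑ k, w k)) :
    ∀ (i : Fin d) (w : Fin d → ℝ), (∀ k, 0 ≤ w k) → w ≠ 0 → w i = 0 →
      fderiv ℝ g w (Pi.single i 1) = 0 := by
  intro i w hw hw0 hwi
  have hs : ∑ k, w k ≠ 0 := fun h =>
    hw0 (funext fun k => (sum_eq_zero_iff_of_nonneg fun k _ => hw k).1 h k (mem_univ k))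
  have hg' : g = f ∘ toLamperti := hg
  rw [hg', fderiv_comp w (hf.differentiable one_ne_zero _)
      (hasFDerivAt_toLamperti hs).differentiableAt,
    ContinuousLinearMap.comp_apply, fderiv_toLamperti_single hs hwi, map_smul,
    toLamperti, hbc i w hw hw0 hwi, smul_zero]

/-- Functions in class 𝒟 (vanishing conormal derivative in the Lamperti coordinates)
correspond to functions `g(w) = f(log‖w‖₁, arg w)` with vanishing normal derivative at
the faces of the orthant. -/
theorem classD_implies_neumann (d : ℕ) (hd : 1 ≤ d)
    (f : ℝ × (Fin d → ℝ) → ℝ) (hf : ContDiff ℝ 1 f)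
    (hbc : ∀ (i : Fin d) (w : Fin d → ℝ), (∀ k, 0 ≤ w k) → w ≠ 0 → w i = 0 →
      fderiv ℝ f (Real.log (∑ k, w k), fun k => w k / ∑ k, w k)
        ((1 : ℝ), fun j => if j = i then (1 : ℝ) else -(w j / ∑ k, w k)) = 0)
    (g : (Fin d → ℝ) → ℝ)
    (hg : g = fun w => f (Real.log (∑ k, w k), fun k => w k / ∑ k, w k)) :
    ∀ (i : Fin d) (w : Fin d → ℝ), (∀ k, 0 ≤ w k) → w ≠ 0 → w i = 0 →
      fderiv ℝ g w (Pi.single i 1) = 0 :=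
  classD_implies_neumann_general d f hf hbc g hg
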